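/- arXiv:0911.0524 — 3 statements merged into one kernel-verified Lean document; each statement's English description precedes it below -/
import Mathlib

section
/- If u and v have cyclically conjugate cyclically irreducible forms (ρ(u) and ρ(v) are cyclic conjugates in Σ*), then u ≡_M v (u and v are left and right conjugates in M). -/
/-- `u` and `v` are cyclic conjugates in the free monoid `Σ*`. -/
def CycConj {α : Type*} (u v : List α) : Prop :=
  ∃ x y : List α, u = x ++ y ∧ v = y ++ x

/-- One rewriting step of the rewriting system `R`. -/
def Step {α : Type*} (R : List α → List α → Prop) (u v : List α) : Prop :=
  ∃ l r x y : List α, R l r ∧ u = x ++ l ++ y ∧ v = x ++ r ++ y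

/-- One cyclic reduction step: some cyclic conjugate of `u` rewrites to `v`. -/
def CycStep {α : Type*} (R : List α → List α → Prop) (u v : List α) : Prop :=
  ∃ w : List α, CycConj u w ∧ Step R w v

/-- `u` is cyclically irreducible: `u` and all its cyclic conjugates are irreducible. -/
def CycIrred {α : Type*} (R : List α → List α → Prop) (u : List α) : Prop :=
  ∀ w : List α, CycConj u w → ∀ v : List α, ¬ Step R w v

/-- Equality in the monoid presented by the rewriting system `R`. -/
def MEq {α : Type*} (R : List α → List α → Prop) : List α → List α → Prop :=
  Relation.EqvGen (Step R)

/-- `u ≡_M v` : `u` and `v` are left and right conjugates in the monoid presented by `R`. -/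
def MConj {α : Type*} (R : List α → List α → Prop) (u v : List α) : Prop :=
  ∃ x y : List α, MEq R (u ++ x) (x ++ v) ∧ MEq R (y ++ u) (v ++ y)

/-!
Conjugacy `≡_M` is an equivalence relation: conjugators compose because equality in `M` is a
congruence for concatenation. It contains cyclic conjugacy in `Σ*` (for `u = xy`, `v = yx` both
`xy · x = x · yx` and `y · xy = yx · y` hold letter by letter) and equality in `M`, hence every
cyclic reduction step. So `u ≡_M ρ(u) ≡_M ρ(v) ≡_M v`.
-/

open Function in
theorem Relation.EqvGen.lift {α β : Type*} {r : α → α → Prop} {p : β → β → Prop} (f : α → β)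
    (h : r ≤ (p on f)) : EqvGen r ≤ (EqvGen p on f) := by
  intro a b hab
  induction hab with
  | rel a b hab => exact .rel _ _ (h a b hab)
  | refl a => exact .refl _
  | symm a b _ ih => exact .symm _ _ ih
  | trans a b c _ _ ihab ihbc => exact .trans _ _ _ ihab ihbc

section

variable {α : Type*} {R : List α → List α → Prop} {a b c : List α}

theorem Step.append_left (c : List α) (h : Step R a b) : Step R (c ++ a) (c ++ b) := by
  obtain ⟨l, r, x, y, hlr, rfl, rfl⟩ := h
  exact ⟨l, r, c ++ x, y, hlr, by simp, by simp⟩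

theorem Step.append_right (c : List α) (h : Step R a b) : Step R (a ++ c) (b ++ c) := by
  obtain ⟨l, r, x, y, hlr, rfl, rfl⟩ := h
  exact ⟨l, r, x, y ++ c, hlr, by simp, by simp⟩

theorem MEq.append_left (c : List α) (h : MEq R a b) : MEq R (c ++ a) (c ++ b) :=
  Relation.EqvGen.lift (c ++ ·) (fun _ _ ↦ Step.append_left c) a b h

theorem MEq.append_right (c : List α) (h : MEq R a b) : MEq R (a ++ c) (b ++ c) :=
  Relation.EqvGen.lift (· ++ c) (fun _ _ ↦ Step.append_right c) a b h

theorem MConj.of_mEq (h : MEq R a b) : MConj R a b :=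
  ⟨[], [], by simpa using h, by simpa using h⟩

theorem MConj.refl (R : List α → List α → Prop) (a : List α) : MConj R a a :=
  .of_mEq (.refl a)

theorem MConj.symm (h : MConj R a b) : MConj R b a :=
  let ⟨x, y, hx, hy⟩ := h
  ⟨y, x, .symm _ _ hy, .symm _ _ hx⟩

theorem MConj.trans (hab : MConj R a b) (hbc : MConj R b c) : MConj R a c := by
  obtain ⟨x, y, hx, hy⟩ := hab
  obtain ⟨x', y', hx', hy'⟩ := hbc
  refine ⟨x ++ x', y' ++ y, ?_, ?_⟩
  · have h₁ := hx.append_right x'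
    have h₂ := hx'.append_left x
    simp only [List.append_assoc] at h₁ h₂ ⊢
    exact .trans _ _ _ h₁ h₂
  · have h₁ := hy.append_left y'
    have h₂ := hy'.append_right y
    simp only [List.append_assoc] at h₁ h₂ ⊢
    exact .trans _ _ _ h₁ h₂

theorem MConj.of_cycConj (R : List α → List α → Prop) (h : CycConj a b) : MConj R a b := by
  obtain ⟨x, y, rfl, rfl⟩ := h
  exact ⟨x, y, by simpa using .refl _, by simpa using .refl _⟩

theorem MConj.of_cycStep (h : CycStep R a b) : MConj R a b :=
  let ⟨_, hconj, hstep⟩ := h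
  (of_cycConj R hconj).trans (of_mEq (.rel _ _ hstep))

theorem MConj.of_reflTransGen_cycStep (h : Relation.ReflTransGen (CycStep R) a b) :
    MConj R a b := by
  induction h with
  | refl => exact .refl R a
  | tail _ hstep ih => exact ih.trans (.of_cycStep hstep)

end

theorem mconj_of_conj_forms_general {α : Type*} (R : List α → List α → Prop)
    (u v ru rv : List α)
    (hru : Relation.ReflTransGen (CycStep R) u ru)
    (hrv : Relation.ReflTransGen (CycStep R) v rv)
    (hconj : CycConj ru rv) :
    MConj R u v :=
  (MConj.of_reflTransGen_cycStep hru).trans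
    ((MConj.of_cycConj R hconj).trans (MConj.of_reflTransGen_cycStep hrv).symm)

/-- if the cyclically irreducible forms of `u` and `v` are cyclic
conjugates in `Σ*`, then `u ≡_M v`. -/
theorem mconj_of_conj_forms {α : Type*} (R : List α → List α → Prop)
    (u v ru rv : List α)
    (hru : Relation.ReflTransGen (CycStep R) u ru) (hiru : CycIrred R ru)
    (hrv : Relation.ReflTransGen (CycStep R) v rv) (hirv : CycIrred R rv)
    (hconj : CycConj ru rv) :
    MConj R u v :=
  mconj_of_conj_forms_general R u v ru rv hru hrv hconj
end

section
/- Let R be a complete, reduced, cyclically complete rewriting system for M. If u and v are transposed in M (u =_M xy, v =_M yx for some words x, y), then the cyclically irreducible forms ρ(u) and ρ(v) are cyclic conjugates in Σ*. -/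
/-- `R` is reduced: right-hand sides are irreducible and no left-hand side
properly contains another left-hand side. -/
def Reduced {α : Type*} (R : List α → List α → Prop) : Prop :=
  ∀ l r : List α, R l r → (∀ v : List α, ¬ Step R r v) ∧
    ∀ l' r' x y : List α, R l' r' → l = x ++ l' ++ y → x = [] ∧ y = []

/-! By cyclic confluence, every cyclic reduct of `w` cyclically reduces to a cyclic conjugate of
`ρ(w)`.  Ordinary reductions are cyclic reductions, so by Church–Rosser words equal in `M` have
a common cyclic reduct, and hence cyclically conjugate forms `ρ`.  A cyclic conjugate `w'` of `w`
is either cyclically irreducible (when `w` is) or cyclically reduces to whatever `w` reduces to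
in one step.  Chaining `u =_M xy`, `xy ~ yx`, `yx =_M v` gives the theorem. -/

theorem Relation.join_of_eqvGen {α : Type*} {r : α → α → Prop}
    (hconf : ∀ a b c, ReflTransGen r a b → ReflTransGen r a c → Join (ReflTransGen r) b c)
    {a b : α} (h : EqvGen r a b) : Join (ReflTransGen r) a b :=
  (equivalence_join hconf).eqvGen_iff.mp (EqvGen.mono (fun _ b h => ⟨b, .single h, .refl⟩) _ _ h)

def CycConfluent {α : Type*} (R : List α → List α → Prop) : Prop :=
  ∀ w u v : List α, Relation.ReflTransGen (CycStep R) w u →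
    Relation.ReflTransGen (CycStep R) w v →
    ∃ z z' : List α, CycConj z z' ∧ Relation.ReflTransGen (CycStep R) u z ∧
      Relation.ReflTransGen (CycStep R) v z'

/-- `a` is a cyclically irreducible form `ρ(w)` of `w`. -/
def CycNF {α : Type*} (R : List α → List α → Prop) (w a : List α) : Prop :=
  Relation.ReflTransGen (CycStep R) w a ∧ CycIrred R a

section

variable {α : Type*} {R : List α → List α → Prop} {u v w w' a p q : List α}

theorem cycConj_iff_isRotated : CycConj u v ↔ u ~r v := by
  constructor
  · rintro ⟨x, y, rfl, rfl⟩
    exact List.isRotated_append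
  · intro h
    obtain ⟨n, hn, rfl⟩ := List.isRotated_iff_mod.mp h
    exact ⟨u.take n, u.drop n, (List.take_append_drop n u).symm,
      List.rotate_eq_drop_append_take hn⟩

theorem CycConj.refl (u : List α) : CycConj u u :=
  cycConj_iff_isRotated.mpr (List.IsRotated.refl u)

theorem CycConj.symm (h : CycConj u v) : CycConj v u :=
  cycConj_iff_isRotated.mpr (cycConj_iff_isRotated.mp h).symm

theorem CycConj.trans (h₁ : CycConj u v) (h₂ : CycConj v w) : CycConj u w :=
  cycConj_iff_isRotated.mpr ((cycConj_iff_isRotated.mp h₁).trans (cycConj_iff_isRotated.mp h₂))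

theorem CycStep.of_step (h : Step R u v) : CycStep R u v :=
  ⟨u, .refl u, h⟩

theorem Relation.ReflTransGen.cycStep_of_step (h : Relation.ReflTransGen (Step R) u v) :
    Relation.ReflTransGen (CycStep R) u v :=
  Relation.ReflTransGen.mono (fun _ _ => CycStep.of_step) _ _ h

theorem CycStep.of_cycConj (hpq : CycConj p q) (h : CycStep R q v) : CycStep R p v := by
  obtain ⟨w, hqw, hw⟩ := h
  exact ⟨w, hpq.trans hqw, hw⟩

theorem CycIrred.of_cycConj (hp : CycIrred R p) (hpq : CycConj p q) : CycIrred R q :=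
  fun w hqw => hp w (hpq.trans hqw)

theorem CycIrred.eq_of_reflTransGen (hp : CycIrred R p)
    (h : Relation.ReflTransGen (CycStep R) p q) : q = p := by
  rcases Relation.ReflTransGen.cases_head h with rfl | ⟨b, ⟨w, hpw, hw⟩, _⟩
  · rfl
  · exact absurd hw (hp w hpw b)

theorem CycNF.exists_of_reflTransGen (hconfC : CycConfluent R) (ha : CycNF R w a)
    (hw' : Relation.ReflTransGen (CycStep R) w w') : ∃ a', CycConj a a' ∧ CycNF R w' a' := by
  obtain ⟨z, a', hza', haz, hw'a'⟩ := hconfC w a w' ha.1 hw'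
  obtain rfl := ha.2.eq_of_reflTransGen haz
  exact ⟨a', hza', hw'a', ha.2.of_cycConj hza'⟩

theorem CycNF.cycConj (hconfC : CycConfluent R) (hp : CycNF R w p) (hq : CycNF R w q) :
    CycConj p q := by
  obtain ⟨q', hpq', hq'⟩ := hp.exists_of_reflTransGen hconfC hq.1
  rwa [hq.2.eq_of_reflTransGen hq'.1] at hpq'

theorem CycNF.exists_of_meq
    (hconfS : ∀ w u v : List α, Relation.ReflTransGen (Step R) w u →
      Relation.ReflTransGen (Step R) w v →
      ∃ z : List α, Relation.ReflTransGen (Step R) u z ∧ Relation.ReflTransGen (Step R) v z)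
    (hconfC : CycConfluent R) (ha : CycNF R w a) (h : MEq R w w') :
    ∃ a', CycConj a a' ∧ CycNF R w' a' := by
  obtain ⟨z, hwz, hw'z⟩ := Relation.join_of_eqvGen hconfS h
  obtain ⟨a', haa', hza'⟩ := ha.exists_of_reflTransGen hconfC hwz.cycStep_of_step
  exact ⟨a', haa', hw'z.cycStep_of_step.trans hza'.1, hza'.2⟩

theorem CycNF.exists_of_cycConj (ha : CycNF R w a) (hww' : CycConj w w') :
    ∃ a', CycConj a a' ∧ CycNF R w' a' := by
  rcases Relation.ReflTransGen.cases_head ha.1 with rfl | ⟨b, hwb, hba⟩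
  · exact ⟨w', hww', .refl, ha.2.of_cycConj hww'⟩
  · exact ⟨a, .refl a, .head (hwb.of_cycConj hww'.symm) hba, ha.2⟩

end

theorem conj_forms_of_transposed_general {α : Type*} (R : List α → List α → Prop)
    (hconfS : ∀ w u v : List α, Relation.ReflTransGen (Step R) w u →
      Relation.ReflTransGen (Step R) w v →
      ∃ z : List α, Relation.ReflTransGen (Step R) u z ∧
        Relation.ReflTransGen (Step R) v z)
    (hconfC : ∀ w u v : List α, Relation.ReflTransGen (CycStep R) w u →
      Relation.ReflTransGen (CycStep R) w v →
      ∃ z z' : List α, CycConj z z' ∧ Relation.ReflTransGen (CycStep R) u z ∧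
        Relation.ReflTransGen (CycStep R) v z')
    (u v ru rv : List α)
    (htrans : ∃ x y : List α, MEq R u (x ++ y) ∧ MEq R v (y ++ x))
    (hru : Relation.ReflTransGen (CycStep R) u ru) (hiru : CycIrred R ru)
    (hrv : Relation.ReflTransGen (CycStep R) v rv) (hirv : CycIrred R rv) :
    CycConj ru rv := by
  obtain ⟨x, y, hu, hv⟩ := htrans
  obtain ⟨a, hru_a, ha⟩ := CycNF.exists_of_meq hconfS hconfC ⟨hru, hiru⟩ hu
  obtain ⟨b, hab, hb⟩ := ha.exists_of_cycConj ⟨x, y, rfl, rfl⟩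
  obtain ⟨c, hbc, hc⟩ := hb.exists_of_meq hconfS hconfC (.symm _ _ hv)
  exact hru_a.trans (hab.trans (hbc.trans (hc.cycConj hconfC ⟨hrv, hirv⟩)))

/-- for a complete, reduced, cyclically complete rewriting system,
transposed words have cyclically conjugate cyclically irreducible forms. -/
theorem conj_forms_of_transposed {α : Type*} (R : List α → List α → Prop)
    (htermS : ¬ ∃ g : ℕ → List α, ∀ n : ℕ, Step R (g n) (g (n + 1)))
    (hconfS : ∀ w u v : List α, Relation.ReflTransGen (Step R) w u →
      Relation.ReflTransGen (Step R) w v →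
      ∃ z : List α, Relation.ReflTransGen (Step R) u z ∧
        Relation.ReflTransGen (Step R) v z)
    (hred : Reduced R)
    (htermC : ¬ ∃ g : ℕ → List α, ∀ n : ℕ, CycStep R (g n) (g (n + 1)))
    (hconfC : ∀ w u v : List α, Relation.ReflTransGen (CycStep R) w u →
      Relation.ReflTransGen (CycStep R) w v →
      ∃ z z' : List α, CycConj z z' ∧ Relation.ReflTransGen (CycStep R) u z ∧
        Relation.ReflTransGen (CycStep R) v z')
    (u v ru rv : List α)
    (htrans : ∃ x y : List α, MEq R u (x ++ y) ∧ MEq R v (y ++ x))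
    (hru : Relation.ReflTransGen (CycStep R) u ru) (hiru : CycIrred R ru)
    (hrv : Relation.ReflTransGen (CycStep R) v rv) (hirv : CycIrred R rv) :
    CycConj ru rv :=
  conj_forms_of_transposed_general R hconfS hconfC u v ru rv htrans hru hiru hrv hirv
end

section
/- Assuming the cyclic reduction relation ↬ is terminating, ↬ is confluent (up to cyclic conjugacy) if and only if it is locally confluent (up to cyclic conjugacy). -/
/-!
Newman's lemma modulo an equivalence `E`, for a relation `r` whose steps out of `a` are also
steps out of every `a'` with `E a a'` (for `↬`, a step may start at any cyclic conjugate).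
The usual well-founded induction goes through: given a reduction `z ↬* a` and `E z z'`, its first
step can be taken from `z'` instead, so `z' ↬* b` with `E a b`. This lets one glue the two joins
modulo `E` produced by local confluence and the induction hypothesis.
-/

namespace Relation

variable {β : Type*} {r E : β → β → Prop}

def JoinModulo (r E : β → β → Prop) (u v : β) : Prop :=
  ∃ z z', E z z' ∧ ReflTransGen r u z ∧ ReflTransGen r v z'

theorem JoinModulo.symm (hE : Equivalence E) {u v : β} (h : JoinModulo r E u v) :
    JoinModulo r E v u :=
  let ⟨z, z', hzz', hu, hv⟩ := h
  ⟨z', z, hE.symm hzz', hv, hu⟩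

theorem JoinModulo.of_reflTransGen (hE : Equivalence E) {u v : β} (h : ReflTransGen r u v) :
    JoinModulo r E u v :=
  ⟨v, v, hE.refl v, h, .refl⟩

theorem ReflTransGen.exists_rel_of_rel_left (hE : Equivalence E)
    (hr : ∀ a a' b, E a a' → r a b → r a' b) {z z' a : β} (hzz' : E z z')
    (h : ReflTransGen r z a) : ∃ b, ReflTransGen r z' b ∧ E a b := by
  rcases h.cases_head with rfl | ⟨c, hzc, hca⟩
  · exact ⟨z', .refl, hzz'⟩
  · exact ⟨a, .head (hr z z' c hzz' hzc) hca, hE.refl a⟩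

theorem JoinModulo.of_locally_of_wellFounded (hE : Equivalence E)
    (hr : ∀ a a' b, E a a' → r a b → r a' b)
    (hwf : WellFounded (flip r)) (hloc : ∀ w u v, r w u → r w v → JoinModulo r E u v) :
    ∀ w u v, ReflTransGen r w u → ReflTransGen r w v → JoinModulo r E u v := by
  intro w
  induction w using hwf.induction with
  | _ w ih =>
    intro u v hu hv
    rcases hu.cases_head with rfl | ⟨u₁, hwu₁, hu₁u⟩
    · exact .of_reflTransGen hE hv
    rcases hv.cases_head with rfl | ⟨v₁, hwv₁, hv₁v⟩
    · exact (JoinModulo.of_reflTransGen hE (.head hwu₁ hu₁u)).symm hE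
    obtain ⟨z, z', hzz', hu₁z, hv₁z'⟩ := hloc w u₁ v₁ hwu₁ hwv₁
    obtain ⟨a, a', haa', hua, hza'⟩ := ih u₁ hwu₁ u z hu₁u hu₁z
    obtain ⟨b, hz'b, ha'b⟩ := hza'.exists_rel_of_rel_left hE hr hzz'
    obtain ⟨c, c', hcc', hvc, hbc'⟩ := ih v₁ hwv₁ v b hv₁v (hv₁z'.trans hz'b)
    obtain ⟨d, had, hc'd⟩ :=
      hbc'.exists_rel_of_rel_left hE hr (hE.symm (hE.trans haa' ha'b))
    exact ⟨d, c, hE.symm (hE.trans hcc' hc'd), hua.trans had, hvc⟩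

theorem joinModulo_iff_locally (hE : Equivalence E) (hr : ∀ a a' b, E a a' → r a b → r a' b)
    (hwf : WellFounded (flip r)) :
    (∀ w u v, ReflTransGen r w u → ReflTransGen r w v → JoinModulo r E u v) ↔
      ∀ w u v, r w u → r w v → JoinModulo r E u v :=
  ⟨fun h w u v hu hv => h w u v (.single hu) (.single hv),
    JoinModulo.of_locally_of_wellFounded hE hr hwf⟩

end Relation

namespace CycConj

variable {α : Type*}

theorem refl_s12 (u : List α) : CycConj u u :=
  ⟨u, [], by simp, by simp⟩

theorem symm_s12 {u v : List α} (h : CycConj u v) : CycConj v u :=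
  let ⟨x, y, hu, hv⟩ := h
  ⟨y, x, hv, hu⟩

theorem trans_s12 {u v w : List α} (h₁ : CycConj u v) (h₂ : CycConj v w) : CycConj u w := by
  obtain ⟨x, y, rfl, rfl⟩ := h₁
  obtain ⟨p, q, hpq, rfl⟩ := h₂
  rcases List.append_eq_append_iff.1 hpq with ⟨a, rfl, rfl⟩ | ⟨c, rfl, rfl⟩
  · exact ⟨a, q ++ y, by simp, by simp⟩
  · exact ⟨x ++ p, c, by simp, by simp⟩

theorem equivalence : Equivalence (@CycConj α) :=
  ⟨refl_s12, symm_s12, trans_s12⟩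

end CycConj

theorem CycStep.of_cycConj_s12 {α : Type*} {R : List α → List α → Prop} {u u' v : List α}
    (h : CycConj u u') (hs : CycStep R u v) : CycStep R u' v :=
  let ⟨w, huw, hwv⟩ := hs
  ⟨w, h.symm_s12.trans_s12 huw, hwv⟩

/-- for a terminating cyclic reduction relation, confluence up to
cyclic conjugacy is equivalent to local confluence up to cyclic conjugacy. -/
theorem cyc_newman {α : Type*} (R : List α → List α → Prop)
    (hterm : ¬ ∃ g : ℕ → List α, ∀ n : ℕ, CycStep R (g n) (g (n + 1))) :
    (∀ w u v : List α, Relation.ReflTransGen (CycStep R) w u →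
      Relation.ReflTransGen (CycStep R) w v →
      ∃ z z' : List α, CycConj z z' ∧ Relation.ReflTransGen (CycStep R) u z ∧
        Relation.ReflTransGen (CycStep R) v z')
    ↔
    (∀ w u v : List α, CycStep R w u → CycStep R w v →
      ∃ z z' : List α, CycConj z z' ∧ Relation.ReflTransGen (CycStep R) u z ∧
        Relation.ReflTransGen (CycStep R) v z') := by
  have hwf : WellFounded (flip (CycStep R)) :=
    wellFounded_iff_isEmpty_descending_chain.2 ⟨fun ⟨g, hg⟩ => hterm ⟨g, hg⟩⟩
  exact Relation.joinModulo_iff_locally CycConj.equivalence (fun _ _ _ => CycStep.of_cycConj_s12) hwf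
end
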